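/- Let W be an admissible word of Z(A) of the form LupvR (resp. p⁻¹upvR, resp. Lvpup⁻¹), where u and v are words in (A₀ ∪ A₁)^{±1}, let θ be a rule applicable to W, and write θ·W = Lu′p′v′R (resp. θ·W = (p′)⁻¹u′p′v′R, resp. θ·W = Lv′p′u′(p′)⁻¹). Then the projections onto A of uv and u′v′ (resp. of v⁻¹uv and (v′)⁻¹u′v′, resp. of vuv⁻¹ and v′u′(v′)⁻¹) are freely equal. -/

import Mathlib

set_option maxHeartbeats 1000000

namespace SM

/-! ### Generic S-machine framework

Words are lists of (letter, sign) pairs; `true` is a positive occurrence.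
An S-machine has state letters (`Q`) and tape letters (`Y`).  Each state
letter has a sector index on its left (`ls`) and on its right (`rs`);
sector `s` carries the tape alphabet `inY s`. -/

abbrev Wrd (Y : Type) := List (Y × Bool)

def wInv {Y : Type} (w : Wrd Y) : Wrd Y := w.reverse.map fun x => (x.1, !x.2)

def IsReduced {Y : Type} (w : Wrd Y) : Prop :=
  List.Chain' (fun a b => ¬ (b.1 = a.1 ∧ b.2 = !a.2)) w

structure Machine (Q Y : Type) where
  ls : Q → ℕ
  rs : Q → ℕ
  inY : ℕ → Y → Prop

/-- A rule replaces each state letter `q` in its domain by a word `u q' v`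
(`act q = some (u, q', v)`), and carries the subsets `Y_i(θ)` (`ys`). -/
structure Rule (Q Y : Type) where
  act : Q → Option (Wrd Y × Q × Wrd Y)
  ys : ℕ → Y → Prop

/-- Sector to the right of an occurrence of a state letter. -/
def secR {Q Y : Type} (M : Machine Q Y) (x : Q × Bool) : ℕ :=
  if x.2 then M.rs x.1 else M.ls x.1

/-- Sector to the left of an occurrence of a state letter. -/
def secL {Q Y : Type} (M : Machine Q Y) (x : Q × Bool) : ℕ :=
  if x.2 then M.ls x.1 else M.rs x.1

def qd {Q : Type} [Inhabited Q] (l : List (Q × Bool)) (j : ℕ) : Q × Bool :=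
  l.getD j (default, true)

/-- An admissible word: state-letter occurrences `qs` (the base) alternating
with reduced tape words `tapes`, with consistent sectors, each tape word
over the alphabet of its sector, and the whole word freely reduced. -/
structure AdmWord {Q Y : Type} [Inhabited Q] (M : Machine Q Y) where
  qs : List (Q × Bool)
  tapes : List (Wrd Y)
  qs_ne : qs ≠ []
  hlen : tapes.length + 1 = qs.length
  consist : ∀ j, j + 1 < qs.length → secR M (qd qs j) = secL M (qd qs (j + 1))
  alph : ∀ j, j + 1 < qs.length → ∀ x ∈ tapes.getD j [], M.inY (secR M (qd qs j)) x.1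
  tred : ∀ j, IsReduced (tapes.getD j [])
  qred : ∀ j, j + 1 < qs.length → (qd qs (j + 1)).1 = (qd qs j).1 →
      (qd qs (j + 1)).2 = !(qd qs j).2 → tapes.getD j [] ≠ []

/-- `|W|_a` : the number of tape letters of `W`. -/
def alen {Q Y : Type} [Inhabited Q] {M : Machine Q Y} (W : AdmWord M) : ℕ :=
  (W.tapes.map List.length).sum

/-- `|W|` : the length of `W`. -/
def wlen {Q Y : Type} [Inhabited Q] {M : Machine Q Y} (W : AdmWord M) : ℕ :=
  W.qs.length + alen W

/-- Replacement of a single (signed) state-letter occurrence by a rule. -/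
def occRepl {Q Y : Type} (r : Rule Q Y) : Q × Bool → Option (Wrd Y × (Q × Bool) × Wrd Y)
  | (q, true) => (r.act q).map fun x => (x.1, (x.2.1, true), x.2.2)
  | (q, false) => (r.act q).map fun x => (wInv x.2.2, (x.2.1, false), wInv x.1)

/-- `Step M r W W'` : the rule `r` is applicable to `W` and `W' = r · W`. -/
def Step {Q Y : Type} [Inhabited Q] (M : Machine Q Y) (r : Rule Q Y)
    (W W' : AdmWord M) : Prop :=
  W.qs.length = W'.qs.length ∧
  (∀ j, j + 1 < W.qs.length → ∀ x ∈ W.tapes.getD j [], r.ys (secR M (qd W.qs j)) x.1) ∧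
  (∀ j, j < W.qs.length → ∃ u v, occRepl r (qd W.qs j) = some (u, qd W'.qs j, v)) ∧
  (∀ j, j + 1 < W.qs.length → ∀ u v u' v',
    occRepl r (qd W.qs j) = some (u, qd W'.qs j, v) →
    occRepl r (qd W.qs (j + 1)) = some (u', qd W'.qs (j + 1), v') →
    FreeGroup.mk (W'.tapes.getD j []) = FreeGroup.mk (v ++ W.tapes.getD j [] ++ u'))

/-! ### The machine `Z(A)`

State letters `L, p(1), p(2), p(3), R`; sector `0` is the `Lp`-sector with
alphabet `A₀ ∪ A₁`, sector `1` is the `pR`-sector with alphabet `A₀`.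
A tape letter is a pair `(a, i)` with `i = false` for `a₀ ∈ A₀` and
`i = true` for `a₁ ∈ A₁`. -/

inductive ZQ
  | L | p1 | p2 | p3 | R
deriving DecidableEq, Inhabited

abbrev ZY (A : Type) := A × Bool

def ZM (A : Type) : Machine ZQ (ZY A) where
  ls := fun q => match q with | .L => 9 | .R => 1 | _ => 0
  rs := fun q => match q with | .L => 0 | .R => 9 | _ => 1
  inY := fun s y => s = 0 ∨ (s = 1 ∧ y.2 = false)

inductive ZRulN (A : Type)
  | r1 (a : A) | r12 (a : A) | r2 (a : A) | r21 | r13 | r3 (a : A)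
deriving DecidableEq

/-- A rule of `Z(A)`: a rule name together with an inversion flag. -/
abbrev ZRul (A : Type) := ZRulN A × Bool

def zinv (A : Type) : ZRul A → ZRul A := fun x => (x.1, !x.2)

/-- Action of the positive rules of `Z(A)` on state letters. -/
def zactN (A : Type) : ZRulN A → ZQ → Option (Wrd (ZY A) × ZQ × Wrd (ZY A))
  | _, .L => some ([], .L, [])
  | _, .R => some ([], .R, [])
  | .r1 a, .p1 => some ([((a, true), false)], .p1, [((a, false), true)])
  | .r12 a, .p1 => some ([((a, false), false), ((a, true), true)], .p2, [])
  | .r2 a, .p2 => some ([((a, false), true)], .p2, [((a, false), false)])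
  | .r21, .p2 => some ([], .p1, [])
  | .r13, .p1 => some ([], .p3, [])
  | .r3 a, .p3 => some ([((a, false), true)], .p3, [((a, false), false)])
  | _, _ => none

/-- Action of the rules of `Z(A)` (including inverse rules). -/
def zact (A : Type) : ZRul A → ZQ → Option (Wrd (ZY A) × ZQ × Wrd (ZY A))
  | (n, false), q => zactN A n q
  | (_, true), .L => some ([], .L, [])
  | (_, true), .R => some ([], .R, [])
  | (.r1 a, true), .p1 => some ([((a, true), true)], .p1, [((a, false), false)])
  | (.r12 a, true), .p2 => some ([((a, true), false), ((a, false), true)], .p1, [])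
  | (.r2 a, true), .p2 => some ([((a, false), false)], .p2, [((a, false), true)])
  | (.r21, true), .p1 => some ([], .p2, [])
  | (.r13, true), .p3 => some ([], .p1, [])
  | (.r3 a, true), .p3 => some ([((a, false), false)], .p3, [((a, false), true)])
  | (_, true), _ => none

/-- The sets `Y_i(θ)` of the rules of `Z(A)`. -/
def zysN (A : Type) : ZRulN A → ℕ → ZY A → Prop
  | .r21, s, _ => s = 0
  | .r13, s, y => s = 1 ∧ y.2 = false
  | .r3 _, s, y => (s = 0 ∨ s = 1) ∧ y.2 = false
  | _, s, y => s = 0 ∨ (s = 1 ∧ y.2 = false)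

def zys (A : Type) (r : ZRul A) : ℕ → ZY A → Prop := zysN A r.1

def zrule (A : Type) (r : ZRul A) : Rule ZQ (ZY A) := ⟨zact A r, zys A r⟩

/-- A reduced computation of the machine `Z(A)`:
`W 0 →_{h 0} W 1 →_{h 1} ⋯ →_{h (t-1)} W t` with freely reduced history. -/
structure ZComp (A : Type) where
  t : ℕ
  W : ℕ → AdmWord (ZM A)
  h : ℕ → ZRul A
  steps : ∀ i, i < t → Step (ZM A) (zrule A (h i)) (W i) (W (i + 1))
  red : ∀ i, i + 1 < t → h (i + 1) ≠ zinv A (h i)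

def isP (q : ZQ) : Prop := q = .p1 ∨ q = .p2 ∨ q = .p3

def baseLpR {A : Type} (W : AdmWord (ZM A)) : Prop :=
  ∃ p, isP p ∧ W.qs = [(ZQ.L, true), (p, true), (ZQ.R, true)]

def baseIPR {A : Type} (W : AdmWord (ZM A)) : Prop :=
  ∃ p p', isP p ∧ isP p' ∧ W.qs = [(p, false), (p', true), (ZQ.R, true)]

/-- For a three-letter base ending with `R`: `W` contains the subword `st·R`. -/
def hasPR {A : Type} (W : AdmWord (ZM A)) (st : ZQ) : Prop :=
  qd W.qs 1 = (st, true) ∧ W.tapes.getD 1 [] = []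

/-- All tape letters of `W` lie in `A₀^{±1}`. -/
def allA0 {A : Type} (W : AdmWord (ZM A)) : Prop :=
  ∀ j, ∀ x ∈ W.tapes.getD j [], x.1.2 = false

/-- `u` is a positive word over `A₀`. -/
def Pos0 {A : Type} (u : Wrd (ZY A)) : Prop :=
  ∀ x ∈ u, x.2 = true ∧ x.1.2 = false

/-- Projection of a tape word onto `A` (sending `a₀, a₁` to `a`). -/
def projA {A : Type} (w : Wrd (ZY A)) : Wrd A := w.map fun x => (x.1.1, x.2)

/-! Under the projection onto `A`, a rule of `Z(A)` replaces a positive letter `p` by `u p' v`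
with `u v` freely trivial, and fixes `L` and `R`.  Each rule acts on only one of `p(1), p(2), p(3)`,
so in the bases `p⁻¹pR` and `Lpp⁻¹` both `p`-letters carry the same state and the letters inserted
next to `p⁻¹` are the inverses of those inserted next to `p`; the conjugating words then cancel. -/

section ThreeLetterBase

variable {Q Y : Type} {M : Machine Q Y} {r : Rule Q Y}

lemma mk_wInv (w : Wrd Y) : FreeGroup.mk (wInv w) = (FreeGroup.mk w)⁻¹ := by
  rw [FreeGroup.inv_mk, FreeGroup.invRev, wInv, List.map_reverse]

lemma mk_pair_not (y : Y) (b : Bool) : FreeGroup.mk [(y, b), (y, !b)] = 1 := by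
  rw [FreeGroup.one_eq_mk]
  exact Quot.sound FreeGroup.Red.Step.cons_not

lemma occRepl_neg_of_pos {q : Q} {u v : Wrd Y} {x : Q × Bool}
    (h : occRepl r (q, true) = some (u, x, v)) :
    occRepl r (q, false) = some (wInv v, (x.1, false), wInv u) := by
  simp only [occRepl, Option.map_eq_some_iff] at h ⊢
  obtain ⟨⟨u, q', v⟩, hq, he⟩ := h
  simp only [Prod.mk.injEq] at he
  obtain ⟨rfl, rfl, rfl⟩ := he
  exact ⟨_, hq, rfl⟩

lemma Step.exists_of_three [Inhabited Q] {W W' : AdmWord M} (h : Step M r W W')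
    {x₀ x₁ x₂ x₀' x₁' x₂' : Q × Bool} {t₀ t₁ t₀' t₁' : Wrd Y}
    (hqs : W.qs = [x₀, x₁, x₂]) (hqs' : W'.qs = [x₀', x₁', x₂'])
    (ht : W.tapes = [t₀, t₁]) (ht' : W'.tapes = [t₀', t₁']) :
    ∃ u₀ v₀ u₁ v₁ u₂ v₂, occRepl r x₀ = some (u₀, x₀', v₀) ∧
      occRepl r x₁ = some (u₁, x₁', v₁) ∧ occRepl r x₂ = some (u₂, x₂', v₂) ∧
      FreeGroup.mk t₀' = FreeGroup.mk v₀ * FreeGroup.mk t₀ * FreeGroup.mk u₁ ∧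
      FreeGroup.mk t₁' = FreeGroup.mk v₁ * FreeGroup.mk t₁ * FreeGroup.mk u₂ := by
  obtain ⟨-, -, hocc, htape⟩ := h
  simp only [qd, hqs, hqs', ht, ht', List.length_cons, List.length_nil] at hocc htape
  obtain ⟨u₀, v₀, h₀⟩ := hocc 0 (by norm_num)
  obtain ⟨u₁, v₁, h₁⟩ := hocc 1 (by norm_num)
  obtain ⟨u₂, v₂, h₂⟩ := hocc 2 (by norm_num)
  refine ⟨u₀, v₀, u₁, v₁, u₂, v₂, h₀, h₁, h₂, ?_, ?_⟩
  · simpa [FreeGroup.mul_mk] using htape 0 (by norm_num) _ _ _ _ h₀ h₁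
  · simpa [FreeGroup.mul_mk] using htape 1 (by norm_num) _ _ _ _ h₁ h₂

end ThreeLetterBase

section ZMachine

variable {A : Type}

lemma mk_projA (w : Wrd (ZY A)) :
    FreeGroup.mk (projA w) = FreeGroup.map Prod.fst (FreeGroup.mk w) := by
  rw [FreeGroup.map.mk, projA]

lemma occRepl_zrule_L (r : ZRul A) :
    occRepl (zrule A r) (ZQ.L, true) = some ([], (ZQ.L, true), []) := by
  obtain ⟨n, s⟩ := r; cases s <;> cases n <;> rfl

lemma occRepl_zrule_R (r : ZRul A) :
    occRepl (zrule A r) (ZQ.R, true) = some ([], (ZQ.R, true), []) := by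
  obtain ⟨n, s⟩ := r; cases s <;> cases n <;> rfl

lemma eq_of_occRepl_zrule_eq_some {r : ZRul A} {q q' : ZQ} {b b' : Bool}
    {y y' : Wrd (ZY A) × (ZQ × Bool) × Wrd (ZY A)} (hq : isP q) (hq' : isP q')
    (h : occRepl (zrule A r) (q, b) = some y) (h' : occRepl (zrule A r) (q', b') = some y') :
    q = q' := by
  obtain ⟨n, s⟩ := r
  rcases hq with rfl | rfl | rfl <;> rcases hq' with rfl | rfl | rfl <;> cases b <;> cases b' <;>
    cases s <;> cases n <;> simp_all [occRepl, zrule, zact, zactN]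

lemma map_mk_mul_map_mk_eq_one_of_occRepl_zrule {r : ZRul A} {q : ZQ} {u v : Wrd (ZY A)}
    {x : ZQ × Bool} (h : occRepl (zrule A r) (q, true) = some (u, x, v)) :
    FreeGroup.map Prod.fst (FreeGroup.mk u) * FreeGroup.map Prod.fst (FreeGroup.mk v) = 1 := by
  obtain ⟨n, s⟩ := r
  cases q <;> cases s <;> cases n <;>
    simp only [occRepl, zrule, zact, zactN, Option.map_some, Option.map_none, reduceCtorEq,
      Option.some.injEq, Prod.mk.injEq] at h <;>
    obtain ⟨rfl, -, rfl⟩ := h <;>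
    simp only [FreeGroup.map.mk, FreeGroup.mul_mk, List.map_cons, List.map_nil, List.cons_append,
      List.nil_append, ← FreeGroup.one_eq_mk, map_one, mul_one] <;>
    first | exact mk_pair_not _ true | exact mk_pair_not _ false

variable {r : ZRul A} {W W' : AdmWord (ZM A)}

lemma Step.mk_projA_eq_of_base_LpR (h : Step (ZM A) (zrule A r) W W')
    {p p' : ZQ} {u v u' v' : Wrd (ZY A)}
    (hqs : W.qs = [(ZQ.L, true), (p, true), (ZQ.R, true)]) (ht : W.tapes = [u, v])
    (hqs' : W'.qs = [(ZQ.L, true), (p', true), (ZQ.R, true)]) (ht' : W'.tapes = [u', v']) :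
    FreeGroup.mk (projA (u ++ v)) = FreeGroup.mk (projA (u' ++ v')) := by
  obtain ⟨_, v₀, u₁, v₁, u₂, _, h₀, h₁, h₂, hu', hv'⟩ := h.exists_of_three hqs hqs' ht ht'
  cases h₀.symm.trans (occRepl_zrule_L r)
  cases h₂.symm.trans (occRepl_zrule_R r)
  have hv₁ := eq_inv_of_mul_eq_one_right (map_mk_mul_map_mk_eq_one_of_occRepl_zrule h₁)
  simp only [mk_projA, ← FreeGroup.mul_mk, hu', hv', ← FreeGroup.one_eq_mk, map_mul, map_one, hv₁]
  group

lemma Step.mk_projA_eq_of_base_pInv_p_R (h : Step (ZM A) (zrule A r) W W')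
    {p₀ p p₀' p' : ZQ} {u v u' v' : Wrd (ZY A)} (hp₀ : isP p₀) (hp : isP p)
    (hqs : W.qs = [(p₀, false), (p, true), (ZQ.R, true)]) (ht : W.tapes = [u, v])
    (hqs' : W'.qs = [(p₀', false), (p', true), (ZQ.R, true)]) (ht' : W'.tapes = [u', v']) :
    FreeGroup.mk (projA (wInv v ++ u ++ v)) = FreeGroup.mk (projA (wInv v' ++ u' ++ v')) := by
  obtain ⟨_, v₀, u₁, v₁, u₂, _, h₀, h₁, h₂, hu', hv'⟩ := h.exists_of_three hqs hqs' ht ht'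
  obtain rfl := eq_of_occRepl_zrule_eq_some hp₀ hp h₀ h₁
  cases h₀.symm.trans (occRepl_neg_of_pos h₁)
  cases h₂.symm.trans (occRepl_zrule_R r)
  have hv₁ := eq_inv_of_mul_eq_one_right (map_mk_mul_map_mk_eq_one_of_occRepl_zrule h₁)
  simp only [mk_projA, ← FreeGroup.mul_mk, mk_wInv, hu', hv', ← FreeGroup.one_eq_mk, map_mul,
    map_inv, map_one, hv₁]
  group

lemma Step.mk_projA_eq_of_base_L_p_pInv (h : Step (ZM A) (zrule A r) W W')
    {p₀ p p₀' p' : ZQ} {u v u' v' : Wrd (ZY A)} (hp₀ : isP p₀) (hp : isP p)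
    (hqs : W.qs = [(ZQ.L, true), (p, true), (p₀, false)]) (ht : W.tapes = [v, u])
    (hqs' : W'.qs = [(ZQ.L, true), (p', true), (p₀', false)]) (ht' : W'.tapes = [v', u']) :
    FreeGroup.mk (projA (v ++ u ++ wInv v)) = FreeGroup.mk (projA (v' ++ u' ++ wInv v')) := by
  obtain ⟨_, v₀, u₁, v₁, u₂, _, h₀, h₁, h₂, hv', hu'⟩ := h.exists_of_three hqs hqs' ht ht'
  obtain rfl := eq_of_occRepl_zrule_eq_some hp₀ hp h₂ h₁
  cases h₂.symm.trans (occRepl_neg_of_pos h₁)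
  cases h₀.symm.trans (occRepl_zrule_L r)
  have hv₁ := eq_inv_of_mul_eq_one_right (map_mk_mul_map_mk_eq_one_of_occRepl_zrule h₁)
  simp only [mk_projA, ← FreeGroup.mul_mk, mk_wInv, hu', hv', ← FreeGroup.one_eq_mk, map_mul,
    map_inv, map_one, hv₁]
  group

end ZMachine

/-- Lemma 2.3.  For a single rule application of `Z(A)`,
the projections onto `A` of `uv` (resp. `v⁻¹uv`, resp. `vuv⁻¹`) of the words
`W = LupvR` (resp. `p⁻¹upvR`, resp. `Lvpup⁻¹`) and of `θ·W` are freely equal. -/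
theorem statement_3 (A : Type) (r : ZRul A) (W W' : AdmWord (ZM A))
    (hstep : Step (ZM A) (zrule A r) W W') :
    (∀ p p' u v u' v', isP p → isP p' →
      W.qs = [(ZQ.L, true), (p, true), (ZQ.R, true)] → W.tapes = [u, v] →
      W'.qs = [(ZQ.L, true), (p', true), (ZQ.R, true)] → W'.tapes = [u', v'] →
      FreeGroup.mk (projA (u ++ v)) = FreeGroup.mk (projA (u' ++ v'))) ∧
    (∀ p0 p p0' p' u v u' v', isP p0 → isP p → isP p0' → isP p' →
      W.qs = [(p0, false), (p, true), (ZQ.R, true)] → W.tapes = [u, v] →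
      W'.qs = [(p0', false), (p', true), (ZQ.R, true)] → W'.tapes = [u', v'] →
      FreeGroup.mk (projA (wInv v ++ u ++ v)) =
        FreeGroup.mk (projA (wInv v' ++ u' ++ v'))) ∧
    (∀ p0 p p0' p' u v u' v', isP p0 → isP p → isP p0' → isP p' →
      W.qs = [(ZQ.L, true), (p, true), (p0, false)] → W.tapes = [v, u] →
      W'.qs = [(ZQ.L, true), (p', true), (p0', false)] → W'.tapes = [v', u'] →
      FreeGroup.mk (projA (v ++ u ++ wInv v)) =
        FreeGroup.mk (projA (v' ++ u' ++ wInv v'))) :=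
  ⟨fun _ _ _ _ _ _ _ _ hqs ht hqs' ht' => hstep.mk_projA_eq_of_base_LpR hqs ht hqs' ht',
    fun _ _ _ _ _ _ _ _ hp₀ hp _ _ hqs ht hqs' ht' =>
      hstep.mk_projA_eq_of_base_pInv_p_R hp₀ hp hqs ht hqs' ht',
    fun _ _ _ _ _ _ _ _ hp₀ hp _ _ hqs ht hqs' ht' =>
      hstep.mk_projA_eq_of_base_L_p_pInv hp₀ hp hqs ht hqs' ht'⟩

end SM
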